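/- arXiv:1802.03527 — 2 statements merged into one kernel-verified Lean document; each statement's English description precedes it below -/
import Mathlib

section
/- Let V and W be the spaces of real m×n and p×q matrices equipped with the Frobenius inner product, let L : V → W be a linear map, and let F : V → ℝ and G : W → ℝ be convex functions. For β ≥ 0 define the augmented Lagrangian L_β(X,Y,Z) = F(X) + G(Y) + ⟨L(X) − Y, Z⟩_F + (β/2)‖L(X) − Y‖_F². Then (X*,Y*,Z*) is a saddle point of L_0 (i.e. L_0(X*,Y*,Z) ≤ L_0(X*,Y*,Z*) ≤ L_0(X,Y,Z*) for all X ∈ V, Y ∈ W, Z ∈ W) if and only if (X*,Y*,Z*) is a saddle point of L_β for every β > 0. -/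
open Matrix

/-- Frobenius inner product on real matrices. -/
noncomputable def fip {m n : ℕ} (A B : Matrix (Fin m) (Fin n) ℝ) : ℝ :=
  (Aᵀ * B).trace

/-- Frobenius norm on real matrices. -/
noncomputable def fnorm {m n : ℕ} (A : Matrix (Fin m) (Fin n) ℝ) : ℝ :=
  Real.sqrt (fip A A)

/-- The augmented Lagrangian `L_β(X,Y,Z)`. -/
noncomputable def aug {m n p q : ℕ}
    (L : Matrix (Fin m) (Fin n) ℝ →ₗ[ℝ] Matrix (Fin p) (Fin q) ℝ)
    (F : Matrix (Fin m) (Fin n) ℝ → ℝ) (G : Matrix (Fin p) (Fin q) ℝ → ℝ)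
    (β : ℝ) (X : Matrix (Fin m) (Fin n) ℝ) (Y Z : Matrix (Fin p) (Fin q) ℝ) : ℝ :=
  F X + G Y + fip (L X - Y) Z + β / 2 * (fnorm (L X - Y)) ^ 2

/-- Saddle point of a function of primal variables `(X,Y)` and dual variable `Z`. -/
def IsSaddle {m n p q : ℕ}
    (Φ : Matrix (Fin m) (Fin n) ℝ → Matrix (Fin p) (Fin q) ℝ → Matrix (Fin p) (Fin q) ℝ → ℝ)
    (Xs : Matrix (Fin m) (Fin n) ℝ) (Ys Zs : Matrix (Fin p) (Fin q) ℝ) : Prop :=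
  ∀ X Y Z, Φ Xs Ys Z ≤ Φ Xs Ys Zs ∧ Φ Xs Ys Zs ≤ Φ X Y Zs

/-!
A saddle point of any `L_β` is feasible, `L X* = Y*`: otherwise moving `Z` along the residual
`L X* - Y*` would increase `L_β`. At a feasible point every `L_β` equals `F X* + G Y*`, so being a
saddle point of `L_β` means feasibility together with `F X* + G Y* ≤ L_β(X, Y, Z*)` for all `X, Y`.
This condition is monotone in `β` because the penalty is nonnegative, and letting `β → 0⁺` in
`L_β = L_0 + β ‖L X - Y‖² / 2` recovers it at `β = 0`.
-/

section Frobenius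

variable {m n : ℕ}

lemma fip_self_eq_trace_conjTranspose_mul_self (A : Matrix (Fin m) (Fin n) ℝ) :
    fip A A = (Aᴴ * A).trace := by
  rw [fip, conjTranspose_eq_transpose_of_trivial]

lemma fip_self_nonneg (A : Matrix (Fin m) (Fin n) ℝ) : 0 ≤ fip A A := by
  rw [fip_self_eq_trace_conjTranspose_mul_self]
  exact (posSemidef_conjTranspose_mul_self A).trace_nonneg

lemma fip_self_eq_zero_iff {A : Matrix (Fin m) (Fin n) ℝ} : fip A A = 0 ↔ A = 0 := by
  rw [fip_self_eq_trace_conjTranspose_mul_self, trace_conjTranspose_mul_self_eq_zero_iff]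

lemma fip_zero_left (B : Matrix (Fin m) (Fin n) ℝ) : fip 0 B = 0 := by
  simp [fip]

lemma fip_add_right (A B C : Matrix (Fin m) (Fin n) ℝ) :
    fip A (B + C) = fip A B + fip A C := by
  simp [fip, Matrix.mul_add, trace_add]

lemma fnorm_zero : fnorm (0 : Matrix (Fin m) (Fin n) ℝ) = 0 := by
  rw [fnorm, fip_zero_left, Real.sqrt_zero]

end Frobenius

open Filter Topology in
lemma le_of_forall_pos_le_add_mul {a b c : ℝ} (h : ∀ β > 0, a ≤ b + β * c) : a ≤ b := by
  have hlim : Tendsto (fun β : ℝ => b + β * c) (𝓝[>] 0) (𝓝 b) := by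
    have : Continuous (fun β : ℝ => b + β * c) := by fun_prop
    simpa using (this.tendsto 0).mono_left nhdsWithin_le_nhds
  exact ge_of_tendsto hlim (eventually_nhdsWithin_of_forall h)

section AugmentedLagrangian

variable {m n p q : ℕ} (L : Matrix (Fin m) (Fin n) ℝ →ₗ[ℝ] Matrix (Fin p) (Fin q) ℝ)
  (F : Matrix (Fin m) (Fin n) ℝ → ℝ) (G : Matrix (Fin p) (Fin q) ℝ → ℝ)

lemma aug_eq_aug_zero_add (β : ℝ) (X : Matrix (Fin m) (Fin n) ℝ) (Y Z : Matrix (Fin p) (Fin q) ℝ) :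
    aug L F G β X Y Z = aug L F G 0 X Y Z + β * (fnorm (L X - Y) ^ 2 / 2) := by
  simp only [aug]
  ring

lemma aug_le_aug_of_le {β β' : ℝ} (hβ : β ≤ β') (X : Matrix (Fin m) (Fin n) ℝ)
    (Y Z : Matrix (Fin p) (Fin q) ℝ) : aug L F G β X Y Z ≤ aug L F G β' X Y Z := by
  rw [aug_eq_aug_zero_add L F G β, aug_eq_aug_zero_add L F G β']
  gcongr

lemma aug_of_feasible (β : ℝ) {X : Matrix (Fin m) (Fin n) ℝ} {Y : Matrix (Fin p) (Fin q) ℝ}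
    (hXY : L X = Y) (Z : Matrix (Fin p) (Fin q) ℝ) : aug L F G β X Y Z = F X + G Y := by
  simp only [aug, hXY, sub_self, fip_zero_left, fnorm_zero]
  ring

lemma IsSaddle.feasible {β : ℝ} {Xs : Matrix (Fin m) (Fin n) ℝ} {Ys Zs : Matrix (Fin p) (Fin q) ℝ}
    (h : IsSaddle (aug L F G β) Xs Ys Zs) : L Xs = Ys := by
  have hmax := (h Xs Ys (Zs + (L Xs - Ys))).1
  simp only [aug, fip_add_right] at hmax
  rw [← sub_eq_zero, ← fip_self_eq_zero_iff]
  linarith [fip_self_nonneg (L Xs - Ys)]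

lemma isSaddle_aug_iff (β : ℝ) (Xs : Matrix (Fin m) (Fin n) ℝ) (Ys Zs : Matrix (Fin p) (Fin q) ℝ) :
    IsSaddle (aug L F G β) Xs Ys Zs ↔
      L Xs = Ys ∧ ∀ X Y, F Xs + G Ys ≤ aug L F G β X Y Zs := by
  constructor
  · intro h
    have hfeas := h.feasible
    refine ⟨hfeas, fun X Y => ?_⟩
    simpa only [aug_of_feasible L F G β hfeas] using (h X Y Zs).2
  · rintro ⟨hfeas, hmin⟩ X Y Z
    simp only [aug_of_feasible L F G β hfeas]
    exact ⟨le_rfl, hmin X Y⟩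

end AugmentedLagrangian

theorem stmt0_general {m n p q : ℕ}
    (L : Matrix (Fin m) (Fin n) ℝ →ₗ[ℝ] Matrix (Fin p) (Fin q) ℝ)
    (F : Matrix (Fin m) (Fin n) ℝ → ℝ) (G : Matrix (Fin p) (Fin q) ℝ → ℝ)
    (Xs : Matrix (Fin m) (Fin n) ℝ) (Ys Zs : Matrix (Fin p) (Fin q) ℝ) :
    IsSaddle (aug L F G 0) Xs Ys Zs ↔ ∀ β > 0, IsSaddle (aug L F G β) Xs Ys Zs := by
  simp only [isSaddle_aug_iff]
  constructor
  · rintro ⟨hfeas, hmin⟩ β hβ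
    exact ⟨hfeas, fun X Y => (hmin X Y).trans (aug_le_aug_of_le L F G hβ.le X Y Zs)⟩
  · intro h
    refine ⟨(h 1 one_pos).1, fun X Y => le_of_forall_pos_le_add_mul
      (c := fnorm (L X - Y) ^ 2 / 2) fun β hβ => ?_⟩
    rw [← aug_eq_aug_zero_add L F G β X Y Zs]
    exact (h β hβ).2 X Y

theorem stmt0 {m n p q : ℕ}
    (L : Matrix (Fin m) (Fin n) ℝ →ₗ[ℝ] Matrix (Fin p) (Fin q) ℝ)
    (F : Matrix (Fin m) (Fin n) ℝ → ℝ) (G : Matrix (Fin p) (Fin q) ℝ → ℝ)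
    (hF : ConvexOn ℝ Set.univ F) (hG : ConvexOn ℝ Set.univ G)
    (Xs : Matrix (Fin m) (Fin n) ℝ) (Ys Zs : Matrix (Fin p) (Fin q) ℝ) :
    IsSaddle (aug L F G 0) Xs Ys Zs ↔ ∀ β > 0, IsSaddle (aug L F G β) Xs Ys Zs :=
  stmt0_general L F G Xs Ys Zs
end

section
/- (Convergence of ADM for the TV/L2 problem.) Let V be the space of real m×n matrices and W the space of real p×q matrices, both with the Frobenius inner product; let L : V → W be linear, let H₁ be a real n×n matrix, H₂ a real m×m matrix, B ∈ V, and set F(X) = ‖H₂XH₁ᵀ − B‖_F². Let G : W → ℝ be convex, let β > 0, and define L_β(X,Y,Z) = F(X) + G(Y) + ⟨L(X) − Y, Z⟩_F + (β/2)‖L(X) − Y‖_F². Assume (X*,Y*,Z*) is a saddle point of L_β for every β > 0. Let sequences (X_k), (Y_k), (Z_k) satisfy: X_{k+1} minimizes X ↦ L_β(X, Y_k, Z_k) over V; Y_{k+1} minimizes Y ↦ L_β(X_{k+1}, Y, Z_k) over W; and Z_{k+1} = Z_k + β(L(X_{k+1}) − Y_{k+1}). Then (1) F(X_{k+1}) +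 G(Y_{k+1}) → F(X*) + G(Y*) as k → ∞, and (2) ‖L(X_{k+1}) − Y_{k+1}‖_F → 0 as k → ∞. -/
open Matrix Filter Topology

/-!
The saddle point gives feasibility `L Xs = Ys` and, letting `β → 0`, the Lagrangian inequality
`p* ≤ F X + G Y + ⟪L X - Y, Zs⟫`, where `p* = F Xs + G Ys`. The optimality conditions of the two
minimisations are subgradient inequalities. With `p k = F (X k) + G (Y k)`,
`r k = L (X (k+1)) - Y (k+1)` and `d k = Y (k+1) - Y k` they give
`p* - ⟪r k, Zs⟫ ≤ p (k+1) ≤ p* - ⟪Z (k+1), r k⟫ - β ⟪r k + (Y (k+1) - Ys), d k⟫`.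
Combining the two bounds, `‖Z k - Zs‖² + β² ‖Y k - Ys‖²` decreases by at least `β² ‖r k + d k‖²`
at every step, so `r k + d k → 0` and the iterates stay bounded; since `⟪r k, d k⟫ ≥ 0` by
monotonicity of `∂G`, both `r k → 0` and `d k → 0`, and the sandwich gives `p (k+1) → p*`.
On matrices, `fip` is the Euclidean inner product of the entry vectors.
-/

open RealInnerProductSpace Set

lemma le_of_forall_mem_Ioc_le_add_mul {a b c : ℝ} (h : ∀ t ∈ Ioc (0 : ℝ) 1, a ≤ b + t * c) :
    a ≤ b := by
  have hlim : Tendsto (fun t => b + t * c) (𝓝[>] 0) (𝓝 b) :=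
    tendsto_nhdsWithin_of_tendsto_nhds (Continuous.tendsto' (by fun_prop) _ _ (by simp))
  exact ge_of_tendsto hlim (eventually_of_mem (Ioc_mem_nhdsGT one_pos) h)

/-- First-order optimality: `a` is the derivative of `r` at `x₀` in the direction `x - x₀`. -/
theorem ConvexOn.le_add_of_forall_add_le {E : Type*} [AddCommGroup E] [Module ℝ E]
    {φ r : E → ℝ} (hφ : ConvexOn ℝ univ φ) {x₀ x : E} {a b : ℝ}
    (hmin : ∀ y, φ x₀ + r x₀ ≤ φ y + r y)
    (hr : ∀ t : ℝ, r (x₀ + t • (x - x₀)) = r x₀ + t * a + t ^ 2 * b) :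
    φ x₀ ≤ φ x + a := by
  refine le_of_forall_mem_Ioc_le_add_mul (c := b) fun t ⟨ht₀, ht₁⟩ => ?_
  have hconv := hφ.2 (mem_univ x₀) (mem_univ x) (sub_nonneg.2 ht₁) ht₀.le (sub_add_cancel 1 t)
  have hseg : (1 - t) • x₀ + t • x = x₀ + t • (x - x₀) := by module
  have hm := hmin (x₀ + t • (x - x₀))
  rw [hr, ← hseg] at hm
  simp only [smul_eq_mul] at hconv
  nlinarith

lemma inner_add_norm_sq_add_smul {E : Type*} [NormedAddCommGroup E] [InnerProductSpace ℝ E]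
    (u w z : E) (β t : ℝ) :
    ⟪u + t • w, z⟫ + β / 2 * ‖u + t • w‖ ^ 2
      = ⟪u, z⟫ + β / 2 * ‖u‖ ^ 2 + t * ⟪w, z + β • u⟫ + t ^ 2 * (β / 2 * ‖w‖ ^ 2) := by
  simp only [norm_add_sq_real, inner_add_left, inner_add_right, real_inner_smul_left,
    real_inner_smul_right, norm_smul, Real.norm_eq_abs, mul_pow, sq_abs]
  linear_combination (-(β * t)) * real_inner_comm u w

section AugmentedLagrangian

variable {E₁ E₂ : Type*} [NormedAddCommGroup E₁] [InnerProductSpace ℝ E₁]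
  [NormedAddCommGroup E₂] [InnerProductSpace ℝ E₂]
  (L : E₁ →ₗ[ℝ] E₂) (F : E₁ → ℝ) (G : E₂ → ℝ)

noncomputable def augLagrangian (β : ℝ) (x : E₁) (y z : E₂) : ℝ :=
  F x + G y + ⟪L x - y, z⟫ + β / 2 * ‖L x - y‖ ^ 2

variable {L F G}

theorem augLagrangian_fst_optimality (hF : ConvexOn ℝ univ F) {β : ℝ} {x : E₁} {y z : E₂}
    (hmin : ∀ x', augLagrangian L F G β x y z ≤ augLagrangian L F G β x' y z) (x' : E₁) :
    F x ≤ F x' + ⟪L x' - L x, z + β • (L x - y)⟫ := by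
  refine hF.le_add_of_forall_add_le (r := fun v => ⟪L v - y, z⟫ + β / 2 * ‖L v - y‖ ^ 2)
    (b := β / 2 * ‖L x' - L x‖ ^ 2) (fun v => ?_) fun t => ?_
  · have := hmin v
    unfold augLagrangian at this
    linarith
  · have hsplit : L (x + t • (x' - x)) - y = (L x - y) + t • (L x' - L x) := by
      simp only [map_add, map_smul, map_sub]; abel
    simp only [hsplit, inner_add_norm_sq_add_smul]

theorem augLagrangian_snd_optimality (hG : ConvexOn ℝ univ G) {β : ℝ} {x : E₁} {y z : E₂}
    (hmin : ∀ y', augLagrangian L F G β x y z ≤ augLagrangian L F G β x y' z) (y' : E₂) :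
    G y ≤ G y' + ⟪y - y', z + β • (L x - y)⟫ := by
  refine hG.le_add_of_forall_add_le (r := fun v => ⟪L x - v, z⟫ + β / 2 * ‖L x - v‖ ^ 2)
    (b := β / 2 * ‖y - y'‖ ^ 2) (fun v => ?_) fun t => ?_
  · have := hmin v
    unfold augLagrangian at this
    linarith
  · have hsplit : L x - (y + t • (y' - y)) = (L x - y) + t • (y - y') := by module
    simp only [hsplit, inner_add_norm_sq_add_smul]

variable (L F G) in
def IsAugSaddlePoint (xs : E₁) (ys zs : E₂) : Prop :=
  ∀ β > 0, ∀ x y z, augLagrangian L F G β xs ys z ≤ augLagrangian L F G β xs ys zs ∧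
    augLagrangian L F G β xs ys zs ≤ augLagrangian L F G β x y zs

theorem IsAugSaddlePoint.map_eq {xs : E₁} {ys zs : E₂} (h : IsAugSaddlePoint L F G xs ys zs) :
    L xs = ys := by
  have hz := (h 1 one_pos xs ys (zs + (L xs - ys))).1
  simp only [augLagrangian, inner_add_right] at hz
  rw [← sub_eq_zero, ← real_inner_self_nonpos]
  linarith

theorem IsAugSaddlePoint.le_lagrangian {xs : E₁} {ys zs : E₂}
    (h : IsAugSaddlePoint L F G xs ys zs) (x : E₁) (y : E₂) :
    F xs + G ys ≤ F x + G y + ⟪L x - y, zs⟫ :=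
  le_of_forall_mem_Ioc_le_add_mul (c := ‖L x - y‖ ^ 2 / 2) fun t ht => by
    have := (h t ht.1 x y zs).2
    simp only [augLagrangian, h.map_eq, sub_self, inner_zero_left, norm_zero] at this
    linarith

end AugmentedLagrangian

lemma tendsto_zero_of_add_mul_norm_sq_le {E : Type*} [SeminormedAddCommGroup E] {u : ℕ → ℝ}
    {w : ℕ → E} {c : ℝ} (hc : 0 < c) (hu : ∀ n, 0 ≤ u n)
    (h : ∀ n, u (n + 1) + c * ‖w n‖ ^ 2 ≤ u n) : Tendsto w atTop (𝓝 0) := by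
  have hpartial : ∀ N, ∑ n ∈ Finset.range N, c * ‖w n‖ ^ 2 + u N ≤ u 0 := by
    intro N
    induction N with
    | zero => simp
    | succ N ih => rw [Finset.sum_range_succ]; linarith [h N]
  have hsum : Summable fun n => c * ‖w n‖ ^ 2 :=
    summable_of_sum_range_le (c := u 0) (fun n => by positivity) fun N => by
      linarith [hpartial N, hu N]
  rw [tendsto_zero_iff_norm_tendsto_zero]
  simpa [mul_div_cancel_left₀ _ hc.ne', Real.sqrt_sq (norm_nonneg _)] using
    (hsum.tendsto_atTop_zero.div_const c).sqrt

lemma max_norm_le_norm_add_of_inner_nonneg {E : Type*} [NormedAddCommGroup E]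
    [InnerProductSpace ℝ E] {u v : E} (h : 0 ≤ ⟪u, v⟫) : max ‖u‖ ‖v‖ ≤ ‖u + v‖ := by
  have hsq := norm_add_sq_real u v
  exact max_le (le_of_sq_le_sq (by nlinarith [sq_nonneg ‖v‖]) (norm_nonneg _))
    (le_of_sq_le_sq (by nlinarith [sq_nonneg ‖u‖]) (norm_nonneg _))

lemma tendsto_inner_zero_of_norm_le {ι E : Type*} [NormedAddCommGroup E]
    [InnerProductSpace ℝ E] {l : Filter ι} {u v : ι → E} {C : ℝ} (hu : ∀ i, ‖u i‖ ≤ C)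
    (hv : Tendsto v l (𝓝 0)) : Tendsto (fun i => ⟪u i, v i⟫) l (𝓝 0) :=
  hv.op_zero_isBoundedUnder_le (isBoundedUnder_of ⟨C, hu⟩) (fun v u => ⟪u, v⟫) fun v u =>
    (norm_inner_le_norm u v).trans_eq (mul_comm _ _)

section ADM

variable {E₁ E₂ : Type*} [NormedAddCommGroup E₁] [InnerProductSpace ℝ E₁]
  [NormedAddCommGroup E₂] [InnerProductSpace ℝ E₂]

structure IsADMSequence (L : E₁ →ₗ[ℝ] E₂) (F : E₁ → ℝ) (G : E₂ → ℝ) (β : ℝ) (x : ℕ → E₁)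
    (y z : ℕ → E₂) : Prop where
  isMin_fst : ∀ k x', augLagrangian L F G β (x (k + 1)) (y k) (z k)
    ≤ augLagrangian L F G β x' (y k) (z k)
  isMin_snd : ∀ k y', augLagrangian L F G β (x (k + 1)) (y (k + 1)) (z k)
    ≤ augLagrangian L F G β (x (k + 1)) y' (z k)
  dual_update : ∀ k, z (k + 1) = z k + β • (L (x (k + 1)) - y (k + 1))

namespace IsADMSequence

variable {L : E₁ →ₗ[ℝ] E₂} {F : E₁ → ℝ} {G : E₂ → ℝ} {β : ℝ} {x : ℕ → E₁} {y z : ℕ → E₂}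
  {xs : E₁} {ys zs : E₂}

theorem fst_le (h : IsADMSequence L F G β x y z) (hF : ConvexOn ℝ univ F) (k : ℕ) (x' : E₁) :
    F (x (k + 1)) ≤ F x' + ⟪L x' - L (x (k + 1)), z (k + 1) + β • (y (k + 1) - y k)⟫ := by
  have hz : z k + β • (L (x (k + 1)) - y k) = z (k + 1) + β • (y (k + 1) - y k) := by
    rw [h.dual_update]; module
  rw [← hz]
  exact augLagrangian_fst_optimality hF (h.isMin_fst k) x'

theorem snd_le (h : IsADMSequence L F G β x y z) (hG : ConvexOn ℝ univ G) (k : ℕ) (y' : E₂) :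
    G (y (k + 1)) ≤ G y' + ⟪y (k + 1) - y', z (k + 1)⟫ := by
  rw [h.dual_update]
  exact augLagrangian_snd_optimality hG (h.isMin_snd k) y'

theorem objective_le (h : IsADMSequence L F G β x y z) (hF : ConvexOn ℝ univ F)
    (hG : ConvexOn ℝ univ G) (hfeas : L xs = ys) (k : ℕ) :
    F (x (k + 1)) + G (y (k + 1)) ≤ F xs + G ys - ⟪z (k + 1), L (x (k + 1)) - y (k + 1)⟫
      - β * ⟪(L (x (k + 1)) - y (k + 1)) + (y (k + 1) - ys), y (k + 1) - y k⟫ := by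
  have hf := h.fst_le hF k xs
  have hg := h.snd_le hG k ys
  have hsplit : L xs - L (x (k + 1)) = -((L (x (k + 1)) - y (k + 1)) + (y (k + 1) - ys)) := by
    rw [hfeas]; abel
  rw [hsplit] at hf
  simp only [inner_neg_left, inner_add_left, inner_add_right, inner_sub_left, inner_sub_right,
    real_inner_smul_right] at hf hg ⊢
  linarith [real_inner_comm (z (k + 1)) (L (x (k + 1))), real_inner_comm (z (k + 1)) (y (k + 1))]

/-- Monotonicity of `∂G`: `z (k + 1) ∈ ∂G (y (k + 1))` and `z (k + 2) ∈ ∂G (y (k + 2))`. -/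
theorem inner_residual_nonneg (h : IsADMSequence L F G β x y z) (hG : ConvexOn ℝ univ G)
    (hβ : 0 < β) (k : ℕ) : 0 ≤ ⟪L (x (k + 2)) - y (k + 2), y (k + 2) - y (k + 1)⟫ := by
  have hg₁ : G (y (k + 2)) ≤ G (y (k + 1)) + ⟪y (k + 2) - y (k + 1), z (k + 2)⟫ :=
    h.snd_le hG (k + 1) _
  have hg₂ := h.snd_le hG k (y (k + 2))
  have hz : z (k + 2) = z (k + 1) + β • (L (x (k + 2)) - y (k + 2)) := h.dual_update (k + 1)
  rw [hz] at hg₁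
  simp only [inner_add_right, inner_sub_left, real_inner_smul_right] at hg₁ hg₂
  have : 0 ≤ β * ⟪L (x (k + 2)) - y (k + 2), y (k + 2) - y (k + 1)⟫ := by
    rw [real_inner_comm]; simp only [inner_sub_left]; linarith
  exact nonneg_of_mul_nonneg_right this hβ

theorem lyapunov_succ_le (h : IsADMSequence L F G β x y z) (hF : ConvexOn ℝ univ F)
    (hG : ConvexOn ℝ univ G) (hβ : 0 ≤ β) (hfeas : L xs = ys)
    (hlag : ∀ x' y', F xs + G ys ≤ F x' + G y' + ⟪L x' - y', zs⟫) (k : ℕ) :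
    ‖z (k + 1) - zs‖ ^ 2 + β ^ 2 * ‖y (k + 1) - ys‖ ^ 2
        + β ^ 2 * ‖(L (x (k + 1)) - y (k + 1)) + (y (k + 1) - y k)‖ ^ 2
      ≤ ‖z k - zs‖ ^ 2 + β ^ 2 * ‖y k - ys‖ ^ 2 := by
  have hkey : ⟪z (k + 1) - zs, L (x (k + 1)) - y (k + 1)⟫
      + β * ⟪(L (x (k + 1)) - y (k + 1)) + (y (k + 1) - ys), y (k + 1) - y k⟫ ≤ 0 := by
    rw [inner_sub_left, ← real_inner_comm zs]
    linarith [h.objective_le hF hG hfeas k, hlag (x (k + 1)) (y (k + 1))]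
  have hz : z k - zs = (z (k + 1) - zs) - β • (L (x (k + 1)) - y (k + 1)) := by
    rw [h.dual_update]; abel
  have hy : y k - ys = (y (k + 1) - ys) - (y (k + 1) - y k) := by abel
  rw [hz, hy]
  generalize z (k + 1) - zs = a at hkey ⊢
  generalize y (k + 1) - ys = b at hkey ⊢
  generalize L (x (k + 1)) - y (k + 1) = r at hkey ⊢
  generalize y (k + 1) - y k = d at hkey ⊢
  rw [inner_add_left] at hkey
  rw [norm_sub_sq_real a, norm_sub_sq_real b, norm_add_sq_real r, norm_smul,
    real_inner_smul_right, Real.norm_eq_abs, abs_of_nonneg hβ]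
  nlinarith [mul_nonneg hβ (neg_nonneg.2 hkey)]

theorem tendsto_objective_and_residual (h : IsADMSequence L F G β x y z)
    (hF : ConvexOn ℝ univ F) (hG : ConvexOn ℝ univ G) (hβ : 0 < β)
    (hs : IsAugSaddlePoint L F G xs ys zs) :
    Tendsto (fun k => F (x (k + 1)) + G (y (k + 1))) atTop (𝓝 (F xs + G ys)) ∧
      Tendsto (fun k => L (x (k + 1)) - y (k + 1)) atTop (𝓝 0) := by
  set r := fun k => L (x (k + 1)) - y (k + 1)
  set d := fun k => y (k + 1) - y k
  set V := fun k => ‖z k - zs‖ ^ 2 + β ^ 2 * ‖y k - ys‖ ^ 2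
  have hV : ∀ k, V (k + 1) + β ^ 2 * ‖r k + d k‖ ^ 2 ≤ V k :=
    h.lyapunov_succ_le hF hG hβ.le hs.map_eq hs.le_lagrangian
  have hrd : Tendsto (fun k => r k + d k) atTop (𝓝 0) :=
    tendsto_zero_of_add_mul_norm_sq_le (by positivity) (fun k => by positivity) hV
  have hrd₁ : Tendsto (fun k => ‖r (k + 1) + d (k + 1)‖) atTop (𝓝 0) :=
    (tendsto_norm_zero.comp hrd).comp (tendsto_add_atTop_nat 1)
  have hmax : ∀ k, max ‖r (k + 1)‖ ‖d (k + 1)‖ ≤ ‖r (k + 1) + d (k + 1)‖ := fun k =>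
    max_norm_le_norm_add_of_inner_nonneg (h.inner_residual_nonneg hG hβ k)
  have hr : Tendsto r atTop (𝓝 0) := (tendsto_add_atTop_iff_nat 1).1 <|
    squeeze_zero_norm (fun k => (le_max_left _ _).trans (hmax k)) hrd₁
  have hd : Tendsto d atTop (𝓝 0) := (tendsto_add_atTop_iff_nat 1).1 <|
    squeeze_zero_norm (fun k => (le_max_right _ _).trans (hmax k)) hrd₁
  have hVle : ∀ k, V k ≤ V 0 := fun k =>
    antitone_nat_of_succ_le (fun k => (le_add_of_nonneg_right (by positivity)).trans (hV k))
      (Nat.zero_le k)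
  have hz : ∀ k, ‖z k‖ ≤ ‖zs‖ + √(V 0) := fun k => by
    refine (norm_le_norm_add_norm_sub' _ zs).trans (add_le_add_right (Real.le_sqrt_of_sq_le ?_) _)
    exact (le_add_of_nonneg_right (by positivity)).trans (hVle k)
  have hy : ∀ k, ‖y k - ys‖ ≤ √(V 0) / β := fun k => by
    rw [le_div_iff₀ hβ, mul_comm]
    refine Real.le_sqrt_of_sq_le (le_trans ?_ (hVle k))
    rw [mul_pow]
    exact le_add_of_nonneg_left (by positivity)
  have hlow : Tendsto (fun k => ⟪r k, zs⟫) atTop (𝓝 0) := by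
    simpa using hr.inner (tendsto_const_nhds (x := zs))
  have hup : Tendsto (fun k => ⟪z (k + 1), r k⟫ + β * ⟪r k + (y (k + 1) - ys), d k⟫) atTop
      (𝓝 0) := by
    simp only [inner_add_left]
    simpa using (tendsto_inner_zero_of_norm_le (fun k => hz (k + 1)) hr).add
      (((hr.inner hd).add (tendsto_inner_zero_of_norm_le (fun k => hy (k + 1)) hd)).const_mul β)
  refine ⟨tendsto_of_tendsto_of_tendsto_of_le_of_le (by simpa using tendsto_const_nhds.sub hlow)
    (by simpa using tendsto_const_nhds.sub hup) (fun k => ?_) (fun k => ?_), hr⟩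
  · linarith [hs.le_lagrangian (x (k + 1)) (y (k + 1))]
  · linarith [h.objective_le hF hG hs.map_eq k]

end IsADMSequence

end ADM

section Matrix

variable {m n p q : ℕ}

def matrixToEuclidean : Matrix (Fin m) (Fin n) ℝ ≃ₗ[ℝ] EuclideanSpace ℝ (Fin m × Fin n) where
  toFun A := WithLp.toLp 2 fun ij => A ij.1 ij.2
  invFun v := Matrix.of fun i j => v (i, j)
  map_add' _ _ := rfl
  map_smul' _ _ := rfl
  left_inv _ := rfl
  right_inv _ := rfl

@[simp]
lemma matrixToEuclidean_apply (A : Matrix (Fin m) (Fin n) ℝ) (ij : Fin m × Fin n) :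
    matrixToEuclidean A ij = A ij.1 ij.2 :=
  rfl

lemma fip_eq_inner (A B : Matrix (Fin m) (Fin n) ℝ) :
    fip A B = ⟪matrixToEuclidean A, matrixToEuclidean B⟫ := by
  simp only [fip, Matrix.trace, Matrix.diag, Matrix.mul_apply, Matrix.transpose_apply,
    PiLp.inner_apply, RCLike.inner_apply, conj_trivial, matrixToEuclidean_apply]
  rw [Fintype.sum_prod_type, Finset.sum_comm]
  simp only [mul_comm]

lemma fnorm_eq_norm (A : Matrix (Fin m) (Fin n) ℝ) : fnorm A = ‖matrixToEuclidean A‖ := by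
  rw [fnorm, fip_eq_inner, real_inner_self_eq_norm_sq, Real.sqrt_sq (norm_nonneg _)]

variable (L : Matrix (Fin m) (Fin n) ℝ →ₗ[ℝ] Matrix (Fin p) (Fin q) ℝ)
  (F : Matrix (Fin m) (Fin n) ℝ → ℝ) (G : Matrix (Fin p) (Fin q) ℝ → ℝ)

lemma aug_eq_augLagrangian (β : ℝ) (X : Matrix (Fin m) (Fin n) ℝ) (Y Z : Matrix (Fin p) (Fin q) ℝ) :
    aug L F G β X Y Z = augLagrangian (matrixToEuclidean.arrowCongr matrixToEuclidean L)
      (F ∘ matrixToEuclidean.symm) (G ∘ matrixToEuclidean.symm) β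
      (matrixToEuclidean X) (matrixToEuclidean Y) (matrixToEuclidean Z) := by
  simp [aug, augLagrangian, fip_eq_inner, fnorm_eq_norm]

variable {L F G}

lemma isAugSaddlePoint_matrixToEuclidean {Xs : Matrix (Fin m) (Fin n) ℝ}
    {Ys Zs : Matrix (Fin p) (Fin q) ℝ}
    (h : ∀ β > (0 : ℝ), ∀ X Y Z, aug L F G β Xs Ys Z ≤ aug L F G β Xs Ys Zs ∧
      aug L F G β Xs Ys Zs ≤ aug L F G β X Y Zs) :
    IsAugSaddlePoint (matrixToEuclidean.arrowCongr matrixToEuclidean L)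
      (F ∘ matrixToEuclidean.symm) (G ∘ matrixToEuclidean.symm)
      (matrixToEuclidean Xs) (matrixToEuclidean Ys) (matrixToEuclidean Zs) :=
  fun β hβ => matrixToEuclidean.surjective.forall.2 fun X =>
    matrixToEuclidean.surjective.forall.2 fun Y => matrixToEuclidean.surjective.forall.2 fun Z => by
      simpa only [aug_eq_augLagrangian] using h β hβ X Y Z

lemma isADMSequence_matrixToEuclidean {β : ℝ} {X : ℕ → Matrix (Fin m) (Fin n) ℝ}
    {Y Z : ℕ → Matrix (Fin p) (Fin q) ℝ}
    (hX : ∀ k X', aug L F G β (X (k + 1)) (Y k) (Z k) ≤ aug L F G β X' (Y k) (Z k))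
    (hY : ∀ k Y', aug L F G β (X (k + 1)) (Y (k + 1)) (Z k) ≤ aug L F G β (X (k + 1)) Y' (Z k))
    (hZ : ∀ k, Z (k + 1) = Z k + β • (L (X (k + 1)) - Y (k + 1))) :
    IsADMSequence (matrixToEuclidean.arrowCongr matrixToEuclidean L)
      (F ∘ matrixToEuclidean.symm) (G ∘ matrixToEuclidean.symm) β
      (matrixToEuclidean ∘ X) (matrixToEuclidean ∘ Y) (matrixToEuclidean ∘ Z) where
  isMin_fst k := matrixToEuclidean.surjective.forall.2 fun X' => by
    simpa only [aug_eq_augLagrangian, Function.comp_apply] using hX k X'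
  isMin_snd k := matrixToEuclidean.surjective.forall.2 fun Y' => by
    simpa only [aug_eq_augLagrangian, Function.comp_apply] using hY k Y'
  dual_update k := by simp [hZ k]

lemma convexOn_fnorm_sq_mul_mul_sub (H₁ : Matrix (Fin n) (Fin n) ℝ) (H₂ : Matrix (Fin m) (Fin m) ℝ)
    (B : Matrix (Fin m) (Fin n) ℝ) :
    ConvexOn ℝ univ fun X : Matrix (Fin m) (Fin n) ℝ => fnorm (H₂ * X * H₁ᵀ - B) ^ 2 := by
  let g : Matrix (Fin m) (Fin n) ℝ →ᵃ[ℝ] EuclideanSpace ℝ (Fin m × Fin n) :=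
    (matrixToEuclidean.toLinearMap ∘ₗ mulRightLinearMap (Fin m) ℝ H₁ᵀ ∘ₗ
      mulLeftLinearMap (Fin n) ℝ H₂).toAffineMap - AffineMap.const ℝ _ (matrixToEuclidean B)
  have hconv : ConvexOn ℝ univ fun v : EuclideanSpace ℝ (Fin m × Fin n) => ‖v‖ ^ 2 :=
    (convexOn_norm convex_univ).pow (fun _ _ => norm_nonneg _) 2
  have h := hconv.comp_affineMap g
  rw [preimage_univ] at h
  refine h.congr fun X _ => ?_
  simp [g, fnorm_eq_norm]

end Matrix

theorem stmt2 {m n p q : ℕ}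
    (L : Matrix (Fin m) (Fin n) ℝ →ₗ[ℝ] Matrix (Fin p) (Fin q) ℝ)
    (H₁ : Matrix (Fin n) (Fin n) ℝ) (H₂ : Matrix (Fin m) (Fin m) ℝ)
    (B : Matrix (Fin m) (Fin n) ℝ)
    (F : Matrix (Fin m) (Fin n) ℝ → ℝ)
    (hFdef : ∀ X, F X = (fnorm (H₂ * X * H₁ᵀ - B)) ^ 2)
    (G : Matrix (Fin p) (Fin q) ℝ → ℝ) (hG : ConvexOn ℝ Set.univ G)
    (β : ℝ) (hβ : 0 < β)
    (Xs : Matrix (Fin m) (Fin n) ℝ) (Ys Zs : Matrix (Fin p) (Fin q) ℝ)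
    (hsaddle : ∀ β' > (0:ℝ), ∀ X Y Z,
      aug L F G β' Xs Ys Z ≤ aug L F G β' Xs Ys Zs ∧
      aug L F G β' Xs Ys Zs ≤ aug L F G β' X Y Zs)
    (X : ℕ → Matrix (Fin m) (Fin n) ℝ) (Y Z : ℕ → Matrix (Fin p) (Fin q) ℝ)
    (hX : ∀ k, ∀ X', aug L F G β (X (k+1)) (Y k) (Z k) ≤ aug L F G β X' (Y k) (Z k))
    (hY : ∀ k, ∀ Y', aug L F G β (X (k+1)) (Y (k+1)) (Z k) ≤ aug L F G β (X (k+1)) Y' (Z k))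
    (hZ : ∀ k, Z (k+1) = Z k + β • (L (X (k+1)) - Y (k+1))) :
    Tendsto (fun k => F (X (k+1)) + G (Y (k+1))) atTop (𝓝 (F Xs + G Ys)) ∧
    Tendsto (fun k => fnorm (L (X (k+1)) - Y (k+1))) atTop (𝓝 0) := by
  have hF : ConvexOn ℝ univ (F ∘ matrixToEuclidean.symm) := by
    rw [show F = _ from funext hFdef]
    exact (convexOn_fnorm_sq_mul_mul_sub H₁ H₂ B).comp_linearMap _
  obtain ⟨hobj, hres⟩ := (isADMSequence_matrixToEuclidean hX hY hZ).tendsto_objective_and_residual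
    hF (hG.comp_linearMap _) hβ (isAugSaddlePoint_matrixToEuclidean hsaddle)
  rw [tendsto_zero_iff_norm_tendsto_zero] at hres
  exact ⟨by simpa using hobj, by simpa [fnorm_eq_norm] using hres⟩
end
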